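/- Let p be an odd prime. The quadratic x² + bx + 1 over 𝔽_p with b = (d²−2d−2)/(d²+d+1) (assuming p does not divide d²+d+1 and p does not divide d(d+2)) has a root in 𝔽_p if and only if −3 is a square in 𝔽_p. -/

import Mathlib

theorem stmt_5 (p : ℕ) [hp : Fact p.Prime] (hodd : Odd p) (d : ℤ)
    (hd : ¬ ((p : ℤ) ∣ d * (d + 2) * (d^2 + d + 1))) :
    (∃ x : ZMod p,
        x ^ 2 + (((d : ZMod p)^2 - 2*(d : ZMod p) - 2) / ((d : ZMod p)^2 + (d : ZMod p) + 1)) * x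
          + 1 = 0) ↔
      IsSquare (-3 : ZMod p) := by
  have hpne2 : p ≠ 2 := by rintro rfl; simp [Nat.odd_iff] at hodd
  have h2 : (2 : ZMod p) ≠ 0 := by
    intro h
    have hdvd : p ∣ 2 := by
      have := (ZMod.natCast_eq_zero_iff 2 p).mp (by exact_mod_cast h)
      exact this
    exact hpne2 ((Nat.prime_dvd_prime_iff_eq hp.out Nat.prime_two).mp hdvd)
  set D : ZMod p := (d : ZMod p) with hD
  have hd1 : ¬ ((p:ℤ) ∣ d * (d+2)) := fun h => hd (h.mul_right _)
  have hd2 : ¬ ((p:ℤ) ∣ d^2 + d + 1) := fun h => hd (Dvd.dvd.mul_left h _)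
  have hu : D * (D + 2) ≠ 0 := by
    intro h
    apply hd1
    rw [← ZMod.intCast_zmod_eq_zero_iff_dvd]
    push_cast
    exact h
  have hs : D^2 + D + 1 ≠ 0 := by
    intro h
    apply hd2
    rw [← ZMod.intCast_zmod_eq_zero_iff_dvd]
    push_cast
    exact h
  set b : ZMod p := (D^2 - 2*D - 2) / (D^2 + D + 1) with hb
  set q : ZMod p := D * (D + 2) / (D^2 + D + 1) with hq
  have hqne : q ≠ 0 := div_ne_zero hu hs
  have key : b^2 - 4 = -3 * q^2 := by
    rw [hb, hq, div_pow, div_pow, div_sub' (pow_ne_zero 2 hs), mul_div_assoc', div_eq_div_iff (pow_ne_zero 2 hs) (pow_ne_zero 2 hs)]; ring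
  clear_value b q
  clear hb hq
  constructor
  · rintro ⟨x, hx⟩
    refine ⟨(2*x + b) / q, ?_⟩
    have h1 : (2*x + b)^2 = b^2 - 4 := by linear_combination 4 * hx
    rw [div_mul_div_comm, ← sq, h1, key, sq, mul_div_assoc,
      div_self (mul_ne_zero hqne hqne), mul_one]
  · rintro ⟨t, ht⟩
    refine ⟨(-b + t * q) / 2, ?_⟩
    field_simp
    linear_combination -key - q^2 * ht
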